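/- arXiv:2407.20956 — 2 statements merged into one kernel-verified Lean document; each statement's English description precedes it below -/
import Mathlib

section
/- (Unbiasedness of the DGC gradient estimator.) Let t ≥ 2, let T_1, …, T_t be pairwise disjoint finite datasets each of the same cardinality n ≥ 1, and set H := T_1 ∪ ⋯ ∪ T_{t−1}. Let θ, θ̃ ∈ ℝ^d, let Γ' : Ω → ℝ^d be an integrable random vector with E[Γ'] = G(H, θ̃), let X be uniform on T_t and X̄ be uniform on H (on a common probability space, not necessarily independent of each other or of Γ'). Then the DGC estimator v := (1/t)·(∇_θ ℓ(X, θ) − ∇_θ ℓ(X, θ̃) + G(T_t, θ̃)) + ((t−1)/t)·(∇_θ ℓ(X̄, θ) − (∇_θ ℓ(X̄, θ̃) − Γ')) satisfies E[v] = G(T_1 ∪ ⋯ ∪ T_t, θ). -/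
open MeasureTheory Finset

/-- The full gradient `G(P, θ) = (1/|P|) Σ_{p ∈ P} ∇_θ ℓ(p, θ)`, where
`g p θ` stands for the gradient `∇_θ ℓ(x, y, θ)` at the labeled data point `p = (x,y)`. -/
noncomputable def fullGrad {α : Type*} {d : ℕ}
    (g : α → EuclideanSpace ℝ (Fin d) → EuclideanSpace ℝ (Fin d))
    (P : Finset α) (θ : EuclideanSpace ℝ (Fin d)) : EuclideanSpace ℝ (Fin d) :=
  (P.card : ℝ)⁻¹ • ∑ p ∈ P, g p θ

/-- `X` is uniformly distributed on the finite set `P`. -/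
def IsUniformOn {Ω α : Type*} [MeasurableSpace Ω] (μ : Measure Ω) (X : Ω → α)
    (P : Finset α) : Prop :=
  (∀ ω, X ω ∈ P) ∧ ∀ a ∈ P, μ {ω | X ω = a} = (P.card : ENNReal)⁻¹

lemma integral_comp_uniform {Ω α : Type*} [MeasurableSpace Ω] [MeasurableSpace α]
    [MeasurableSingletonClass α] [DecidableEq α]
    (μ : Measure Ω) [IsProbabilityMeasure μ] {d : ℕ}
    (f : α → EuclideanSpace ℝ (Fin d)) (X : Ω → α) (hXm : Measurable X)
    (P : Finset α) (hX : IsUniformOn μ X P) :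
    ∫ ω, f (X ω) ∂μ = (P.card : ℝ)⁻¹ • ∑ a ∈ P, f a := by
  have hmeas : ∀ a : α, MeasurableSet {ω | X ω = a} := fun a =>
    hXm (measurableSet_singleton a)
  have hfun : (fun ω => f (X ω)) =
      fun ω => ∑ a ∈ P, Set.indicator {ω' | X ω' = a} (fun _ => f a) ω := by
    funext ω
    rw [Finset.sum_eq_single (X ω)]
    · simp [Set.indicator_of_mem, Set.mem_setOf_eq]
    · intro b hb hne
      apply Set.indicator_of_notMem
      simp only [Set.mem_setOf_eq]
      exact fun h => hne h.symm
    · intro h; exact absurd (hX.1 ω) h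
  rw [hfun, integral_finset_sum]
  · rw [Finset.smul_sum]
    refine Finset.sum_congr rfl fun a ha => ?_
    rw [integral_indicator_const _ (hmeas a), measureReal_def, hX.2 a ha]
    simp [ENNReal.toReal_inv]
  · intro a ha
    exact (integrable_const (f a)).indicator (hmeas a)

/-- unbiasedness of the DGC gradient estimator: with pairwise disjoint
equal-size tasks, `H := T_1 ∪ ⋯ ∪ T_{t−1}`, `E[Γ'] = G(H, θ̃)`, `X` uniform on `T_t`
and `X̄` uniform on `H`, the DGC estimator
`v := (1/t)(∇ℓ(X,θ) − ∇ℓ(X,θ̃) + G(T_t,θ̃)) + ((t−1)/t)(∇ℓ(X̄,θ) − (∇ℓ(X̄,θ̃) − Γ'))`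
satisfies `E[v] = G(T_1 ∪ ⋯ ∪ T_t, θ)`. -/
theorem dgc_estimator_unbiased
    {Ω α : Type*} [MeasurableSpace Ω] [MeasurableSpace α] [MeasurableSingletonClass α]
    [DecidableEq α]
    (μ : Measure Ω) [IsProbabilityMeasure μ]
    {d : ℕ} (g : α → EuclideanSpace ℝ (Fin d) → EuclideanSpace ℝ (Fin d))
    (t n : ℕ) (ht : 2 ≤ t) (hn : 1 ≤ n) (T : ℕ → Finset α)
    (hdisj : ∀ i ∈ Finset.Icc 1 t, ∀ j ∈ Finset.Icc 1 t, i ≠ j → Disjoint (T i) (T j))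
    (hcard : ∀ c ∈ Finset.Icc 1 t, (T c).card = n)
    (H : Finset α) (hH : H = (Finset.Icc 1 (t - 1)).biUnion T)
    (θ θt : EuclideanSpace ℝ (Fin d))
    (Γ : Ω → EuclideanSpace ℝ (Fin d)) (hΓint : Integrable Γ μ)
    (hΓmean : ∫ ω, Γ ω ∂μ = fullGrad g H θt)
    (X Xb : Ω → α) (hXm : Measurable X) (hXbm : Measurable Xb)
    (hXu : IsUniformOn μ X (T t)) (hXbu : IsUniformOn μ Xb H)
    (hInt1 : Integrable (fun ω => g (X ω) θ) μ)
    (hInt2 : Integrable (fun ω => g (X ω) θt) μ)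
    (hInt3 : Integrable (fun ω => g (Xb ω) θ) μ)
    (hInt4 : Integrable (fun ω => g (Xb ω) θt) μ) :
    ∫ ω, ((1 / (t : ℝ)) • (g (X ω) θ - g (X ω) θt + fullGrad g (T t) θt)
        + (((t : ℝ) - 1) / t) • (g (Xb ω) θ - (g (Xb ω) θt - Γ ω))) ∂μ
      = fullGrad g ((Finset.Icc 1 t).biUnion T) θ := by
  -- basic index facts
  have ht1 : 1 ≤ t := le_trans (by norm_num) ht
  have htmem : t ∈ Finset.Icc 1 t := by simp [ht1]
  -- cardinality of H
  have hsub : Finset.Icc 1 (t - 1) ⊆ Finset.Icc 1 t := by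
    apply Finset.Icc_subset_Icc le_rfl (Nat.sub_le t 1)
  have hdisjH : ∀ i ∈ Finset.Icc 1 (t - 1), ∀ j ∈ Finset.Icc 1 (t - 1), i ≠ j →
      Disjoint (T i) (T j) := fun i hi j hj hij => hdisj i (hsub hi) j (hsub hj) hij
  have hcardH : H.card = (t - 1) * n := by
    rw [hH, Finset.card_biUnion hdisjH]
    rw [Finset.sum_congr rfl (fun i hi => hcard i (hsub hi))]
    simp [Nat.Icc_eq_range', mul_comm]
  -- disjointness of H and T t
  have hHTt : Disjoint H (T t) := by
    rw [hH, Finset.disjoint_biUnion_left]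
    intro i hi
    refine hdisj i (hsub hi) t htmem ?_
    simp only [Finset.mem_Icc] at hi
    omega
  -- decomposition of the union
  have hunion : (Finset.Icc 1 t).biUnion T = H ∪ T t := by
    rw [hH]
    ext a
    simp only [Finset.mem_union, Finset.mem_biUnion, Finset.mem_Icc]
    constructor
    · rintro ⟨i, ⟨hi1, hi2⟩, ha⟩
      rcases eq_or_ne i t with rfl | hne
      · exact Or.inr ha
      · exact Or.inl ⟨i, ⟨hi1, by omega⟩, ha⟩
    · rintro (⟨i, ⟨hi1, hi2⟩, ha⟩ | ha)
      · exact ⟨i, ⟨hi1, by omega⟩, ha⟩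
      · exact ⟨t, ⟨ht1, le_rfl⟩, ha⟩
  -- expectations of the uniform samples
  have hE1 : ∫ ω, g (X ω) θ ∂μ = fullGrad g (T t) θ :=
    integral_comp_uniform μ (fun a => g a θ) X hXm (T t) hXu
  have hE2 : ∫ ω, g (X ω) θt ∂μ = fullGrad g (T t) θt :=
    integral_comp_uniform μ (fun a => g a θt) X hXm (T t) hXu
  have hE3 : ∫ ω, g (Xb ω) θ ∂μ = fullGrad g H θ :=
    integral_comp_uniform μ (fun a => g a θ) Xb hXbm H hXbu
  have hE4 : ∫ ω, g (Xb ω) θt ∂μ = fullGrad g H θt :=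
    integral_comp_uniform μ (fun a => g a θt) Xb hXbm H hXbu
  -- linearity of the integral
  have hintA : Integrable (fun ω => g (X ω) θ - g (X ω) θt + fullGrad g (T t) θt) μ :=
    ((hInt1.sub hInt2).add (integrable_const _))
  have hintB : Integrable (fun ω => g (Xb ω) θ - (g (Xb ω) θt - Γ ω)) μ :=
    hInt3.sub (hInt4.sub hΓint)
  have hA : Integrable (fun ω => (1/(t:ℝ)) • (g (X ω) θ - g (X ω) θt + fullGrad g (T t) θt)) μ :=
    hintA.smul (1/(t:ℝ))
  have hB : Integrable (fun ω => (((t:ℝ) - 1)/t) • (g (Xb ω) θ - (g (Xb ω) θt - Γ ω))) μ :=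
    hintB.smul (((t:ℝ) - 1)/t)
  have hs12 : Integrable (fun ω => g (X ω) θ - g (X ω) θt) μ := hInt1.sub hInt2
  have hs4Γ : Integrable (fun ω => g (Xb ω) θt - Γ ω) μ := hInt4.sub hΓint
  have hIA : ∫ a, (g (X a) θ - g (X a) θt + fullGrad g (T t) θt) ∂μ = fullGrad g (T t) θ := by
    rw [integral_add hs12 (integrable_const _), integral_sub hInt1 hInt2, integral_const,
      hE1, hE2]
    simp only [measureReal_def, measure_univ, ENNReal.toReal_one, one_smul]
    abel
  have hIB : ∫ a, (g (Xb a) θ - (g (Xb a) θt - Γ a)) ∂μ = fullGrad g H θ := by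
    rw [integral_sub hInt3 hs4Γ, integral_sub hInt4 hΓint, hE3, hE4, hΓmean]
    abel
  rw [integral_add hA hB, integral_smul, integral_smul, hIA, hIB]
  -- now the algebraic identity
  have hcardTt : (T t).card = n := hcard t htmem
  have hcardU : ((Finset.Icc 1 t).biUnion T).card = t * n := by
    rw [hunion, Finset.card_union_of_disjoint hHTt, hcardH, hcardTt]
    have : t - 1 + 1 = t := Nat.succ_pred_eq_of_pos ht1
    nlinarith [Nat.sub_add_cancel ht1]
  have hsumU : ∑ p ∈ (Finset.Icc 1 t).biUnion T, g p θ
      = (∑ p ∈ H, g p θ) + ∑ p ∈ T t, g p θ := by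
    rw [hunion, Finset.sum_union hHTt]
  simp only [fullGrad, hcardU, hcardTt, hcardH, hsumU]
  have htR : (t : ℝ) ≠ 0 := by positivity
  have hnR : (n : ℝ) ≠ 0 := by positivity
  have ht1R : ((t : ℝ) - 1) ≠ 0 := by
    have : (2 : ℝ) ≤ t := by exact_mod_cast ht
    linarith
  have hcast : ((t - 1 : ℕ) : ℝ) = (t : ℝ) - 1 := by
    have := Nat.cast_sub ht1 (R := ℝ); simpa using this
  rw [smul_add, smul_smul, smul_smul]
  rw [Nat.cast_mul, Nat.cast_mul, hcast]
  have h1 : (1 / (t : ℝ)) * ((n : ℝ))⁻¹ = ((t : ℝ) * n)⁻¹ := by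
    field_simp
  have h2 : (((t : ℝ) - 1) / t) * (((t : ℝ) - 1) * n)⁻¹ = ((t : ℝ) * n)⁻¹ := by
    field_simp
  rw [h1, h2]
  abel
end

section
/- (Lemma A.1, second-moment bound for the calibrated gradient.) Consider the SVRG-type setup with L > 0. Let Θ, Θ̃ : Ω → ℝ^d be random parameter vectors and let I be uniform on P and independent of the pair (Θ, Θ̃). Define v := ∇ψ_I(Θ) − ∇ψ_I(Θ̃) + ∇F(Θ̃). Then E[‖v‖²] ≤ 2L·( E[‖Θ − θ*‖²] + E[‖Θ̃ − θ*‖²] ). -/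
open MeasureTheory ProbabilityTheory Finset

lemma measurable_gradient_aux {d : ℕ} (f : EuclideanSpace ℝ (Fin d) → ℝ) :
    Measurable (gradient f) := by
  have h : gradient f = fun x =>
      (InnerProductSpace.toDual ℝ (EuclideanSpace ℝ (Fin d))).symm (fderiv ℝ f x) := rfl
  rw [h]
  exact ((InnerProductSpace.toDual ℝ _).symm.continuous.measurable).comp (measurable_fderiv ℝ f)

lemma avg_var_eq {E : Type*} [NormedAddCommGroup E] [InnerProductSpace ℝ E] {ι : Type*}
    (P : Finset ι) (hP : P.Nonempty) (b : ι → E) :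
    ∑ i ∈ P, (P.card : ℝ)⁻¹ * ‖b i - (P.card : ℝ)⁻¹ • ∑ j ∈ P, b j‖ ^ 2
      = (∑ i ∈ P, (P.card : ℝ)⁻¹ * ‖b i‖ ^ 2)
        - ‖(P.card : ℝ)⁻¹ • ∑ j ∈ P, b j‖ ^ 2 := by
  have hn : (P.card : ℝ) ≠ 0 := Nat.cast_ne_zero.mpr (Finset.card_pos.mpr hP).ne'
  set n : ℝ := (P.card : ℝ) with hn'
  set S : E := ∑ j ∈ P, b j with hS
  have hns : ‖n⁻¹ • S‖ ^ 2 = n⁻¹ ^ 2 * ‖S‖ ^ 2 := by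
    rw [norm_smul, Real.norm_eq_abs, abs_of_nonneg (by positivity), mul_pow]
  have h1 : ∀ i, n⁻¹ * ‖b i - n⁻¹ • S‖ ^ 2
      = n⁻¹ * ‖b i‖ ^ 2 - (2 * n⁻¹ ^ 2) * inner ℝ (b i) S + n⁻¹ * (n⁻¹ ^ 2 * ‖S‖ ^ 2) := by
    intro i
    rw [norm_sub_sq_real, real_inner_smul_right, hns]
    ring
  have h2 : ∑ i ∈ P, (inner ℝ (b i) S : ℝ) = ‖S‖ ^ 2 := by
    rw [← sum_inner, ← hS, real_inner_self_eq_norm_sq]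
  calc ∑ i ∈ P, n⁻¹ * ‖b i - n⁻¹ • S‖ ^ 2
      = ∑ i ∈ P, (n⁻¹ * ‖b i‖ ^ 2 - (2 * n⁻¹ ^ 2) * inner ℝ (b i) S
          + n⁻¹ * (n⁻¹ ^ 2 * ‖S‖ ^ 2)) := Finset.sum_congr rfl fun i _ => h1 i
    _ = (∑ i ∈ P, n⁻¹ * ‖b i‖ ^ 2) - (2 * n⁻¹ ^ 2) * (∑ i ∈ P, (inner ℝ (b i) S : ℝ))
          + n * (n⁻¹ * (n⁻¹ ^ 2 * ‖S‖ ^ 2)) := by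
        rw [Finset.sum_add_distrib, Finset.sum_sub_distrib, ← Finset.mul_sum,
          ← Finset.mul_sum, Finset.sum_const, nsmul_eq_mul, ← hn']
    _ = (∑ i ∈ P, n⁻¹ * ‖b i‖ ^ 2) - ‖n⁻¹ • S‖ ^ 2 := by
        rw [h2, hns]; field_simp; ring

lemma uniform_integral {Ω ι E : Type*} [MeasurableSpace Ω] [MeasurableSpace ι]
    [MeasurableSingletonClass ι] [MeasurableSpace E]
    (μ : Measure Ω) [IsProbabilityMeasure μ]
    (P : Finset ι) (I : Ω → ι) (hIm : Measurable I) (hIu : IsUniformOn μ I P)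
    (Y : Ω → E) (hindep : IndepFun I Y μ)
    (f : ι → E → ℝ) (hfm : ∀ i ∈ P, Measurable (f i))
    (hfi : ∀ i ∈ P, Integrable (fun ω => f i (Y ω)) μ) :
    ∫ ω, f (I ω) (Y ω) ∂μ = ∑ i ∈ P, (P.card : ℝ)⁻¹ * ∫ ω, f i (Y ω) ∂μ := by
  classical
  have hχm : ∀ i : ι, Measurable (fun j : ι => if j = i then (1 : ℝ) else 0) := by
    intro i
    refine Measurable.ite ?_ measurable_const measurable_const
    simp only [Set.setOf_eq_eq_singleton]
    exact measurableSet_singleton i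
  have hpt : (fun ω => f (I ω) (Y ω))
      = fun ω => ∑ i ∈ P, (if I ω = i then (1 : ℝ) else 0) * f i (Y ω) := by
    funext ω
    rw [Finset.sum_congr rfl (fun i _ => ite_mul (I ω = i) (1:ℝ) 0 (f i (Y ω)))]
    simp only [one_mul, zero_mul]
    rw [Finset.sum_ite_eq P (I ω) (fun i => f i (Y ω)), if_pos (hIu.1 ω)]
  have hint : ∀ i ∈ P,
      Integrable (fun ω => (if I ω = i then (1 : ℝ) else 0) * f i (Y ω)) μ := by
    intro i hi
    exact (hfi i hi).bdd_mul ((hχm i).comp hIm).aestronglyMeasurable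
      (c := 1) (ae_of_all _ fun ω => by by_cases h : I ω = i <;> simp [h])
  rw [hpt, integral_finset_sum P hint]
  refine Finset.sum_congr rfl fun i hi => ?_
  have hind : IndepFun (fun ω => if I ω = i then (1 : ℝ) else 0)
      (fun ω => f i (Y ω)) μ := hindep.comp (hχm i) (hfm i hi)
  have hiind : Integrable (fun ω => if I ω = i then (1 : ℝ) else 0) μ := by
    refine (integrable_const (1 : ℝ)).mono' ((hχm i).comp hIm).aestronglyMeasurable ?_
    filter_upwards with ω
    by_cases h : I ω = i <;> simp [h]
  have hmul := hind.integral_fun_mul_eq_mul_integral hiind.aestronglyMeasurable (hfi i hi).aestronglyMeasurable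
  have hmeq : ∫ ω, (if I ω = i then (1 : ℝ) else 0) ∂μ = (P.card : ℝ)⁻¹ := by
    have hset : MeasurableSet {ω | I ω = i} := hIm (measurableSet_singleton i)
    have : (fun ω => if I ω = i then (1 : ℝ) else 0)
        = Set.indicator {ω | I ω = i} (fun _ => (1 : ℝ)) := by
      funext ω; simp [Set.indicator, Set.mem_setOf_eq]
    rw [this, integral_indicator_const _ hset, Measure.real, hIu.2 i hi, smul_eq_mul, mul_one,
      ENNReal.toReal_inv, ENNReal.toReal_natCast]
  calc ∫ ω, (if I ω = i then (1 : ℝ) else 0) * f i (Y ω) ∂μ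
      = (∫ ω, (if I ω = i then (1 : ℝ) else 0) ∂μ) * ∫ ω, f i (Y ω) ∂μ := hmul
    _ = (P.card : ℝ)⁻¹ * ∫ ω, f i (Y ω) ∂μ := by rw [hmeq]

/-- Lemma A.1, second-moment bound for the calibrated gradient: in the
SVRG-type setup with `L > 0`, if `I` is uniform on `P` and independent of `(Θ, Θ̃)`, then
`v := ∇ψ_I(Θ) − ∇ψ_I(Θ̃) + ∇F(Θ̃)` satisfies
`E[‖v‖²] ≤ 2L·(E[‖Θ − θ*‖²] + E[‖Θ̃ − θ*‖²])`. -/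
theorem dgc_second_moment_bound
    {Ω ι : Type*} [MeasurableSpace Ω] [MeasurableSpace ι] [MeasurableSingletonClass ι]
    (μ : Measure Ω) [IsProbabilityMeasure μ]
    {d : ℕ} (ψ : ι → EuclideanSpace ℝ (Fin d) → ℝ)
    (P : Finset ι) (hP : P.Nonempty)
    (L : ℝ) (hL : 0 < L)
    (hdiff : ∀ i ∈ P, Differentiable ℝ (ψ i))
    (hsmooth : ∀ i ∈ P, ∀ θ₁ θ₂,
        ‖gradient (ψ i) θ₁ - gradient (ψ i) θ₂‖ ^ 2 ≤ L * ‖θ₁ - θ₂‖ ^ 2)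
    (F : EuclideanSpace ℝ (Fin d) → ℝ)
    (hF : F = fun θ => (P.card : ℝ)⁻¹ * ∑ i ∈ P, ψ i θ)
    (θst : EuclideanSpace ℝ (Fin d)) (hmin : ∀ θ, F θst ≤ F θ)
    (hgrad0 : gradient F θst = 0)
    (Θ Θt : Ω → EuclideanSpace ℝ (Fin d)) (hΘm : Measurable Θ) (hΘtm : Measurable Θt)
    (I : Ω → ι) (hIm : Measurable I) (hIu : IsUniformOn μ I P)
    (hindep : IndepFun I (fun ω => (Θ ω, Θt ω)) μ)
    (v : Ω → EuclideanSpace ℝ (Fin d))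
    (hv : v = fun ω => gradient (ψ (I ω)) (Θ ω) - gradient (ψ (I ω)) (Θt ω)
        + gradient F (Θt ω))
    (hInt1 : Integrable (fun ω => ‖v ω‖ ^ 2) μ)
    (hInt2 : Integrable (fun ω => ‖Θ ω - θst‖ ^ 2) μ)
    (hInt3 : Integrable (fun ω => ‖Θt ω - θst‖ ^ 2) μ) :
    ∫ ω, ‖v ω‖ ^ 2 ∂μ
      ≤ 2 * L * ((∫ ω, ‖Θ ω - θst‖ ^ 2 ∂μ) + ∫ ω, ‖Θt ω - θst‖ ^ 2 ∂μ) := by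
  have hn : (P.card : ℝ) ≠ 0 := Nat.cast_ne_zero.mpr (Finset.card_pos.mpr hP).ne'
  have hninv : (0:ℝ) ≤ (P.card : ℝ)⁻¹ := by positivity
  have hsum_inv : ∑ _i ∈ P, (P.card : ℝ)⁻¹ = 1 := by
    rw [Finset.sum_const, nsmul_eq_mul, mul_inv_cancel₀ hn]
  -- gradient of F
  have hgF : ∀ θ, gradient F θ = (P.card : ℝ)⁻¹ • ∑ i ∈ P, gradient (ψ i) θ := by
    intro θ
    have hsum : HasFDerivAt (fun θ => ∑ i ∈ P, ψ i θ) (∑ i ∈ P, fderiv ℝ (ψ i) θ) θ :=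
      HasFDerivAt.fun_sum fun i hi => (hdiff i hi θ).hasFDerivAt
    have hFd : HasFDerivAt F ((P.card : ℝ)⁻¹ • ∑ i ∈ P, fderiv ℝ (ψ i) θ) θ := by
      rw [hF]; exact hsum.const_mul _
    have hkey : (InnerProductSpace.toDual ℝ (EuclideanSpace ℝ (Fin d)))
        ((P.card : ℝ)⁻¹ • ∑ i ∈ P, gradient (ψ i) θ)
        = (P.card : ℝ)⁻¹ • ∑ i ∈ P, fderiv ℝ (ψ i) θ := by
      rw [_root_.map_smul, map_sum]
      congr 1
      exact Finset.sum_congr rfl fun i _ =>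
        (InnerProductSpace.toDual ℝ _).apply_symm_apply (fderiv ℝ (ψ i) θ)
    have hg : HasGradientAt F ((P.card : ℝ)⁻¹ • ∑ i ∈ P, gradient (ψ i) θ) θ := by
      rw [hasGradientAt_iff_hasFDerivAt, hkey]; exact hFd
    exact hg.gradient
  have hbar : ∀ θ', (P.card : ℝ)⁻¹ • ∑ i ∈ P,
      (gradient (ψ i) θ' - gradient (ψ i) θst) = gradient F θ' := by
    intro θ'
    rw [Finset.sum_sub_distrib, smul_sub, ← hgF θ', ← hgF θst, hgrad0, sub_zero]
  have hsq : ∀ x y : EuclideanSpace ℝ (Fin d),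
      ‖x - y‖ ^ 2 ≤ 2 * ‖x‖ ^ 2 + 2 * ‖y‖ ^ 2 := by
    intro x y
    have h := norm_sub_le x y
    have h2 : ‖x - y‖ ^ 2 ≤ (‖x‖ + ‖y‖) ^ 2 := pow_le_pow_left₀ (norm_nonneg _) h 2
    nlinarith [sq_nonneg (‖x‖ - ‖y‖)]
  have hrw : ∀ (i : ι) (θ θ' : EuclideanSpace ℝ (Fin d)),
      gradient (ψ i) θ - gradient (ψ i) θ' + gradient F θ'
        = (gradient (ψ i) θ - gradient (ψ i) θst)
          - ((gradient (ψ i) θ' - gradient (ψ i) θst) - gradient F θ') := by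
    intros; abel
  have hbsum : ∀ θ' : EuclideanSpace ℝ (Fin d),
      ∑ i ∈ P, (P.card : ℝ)⁻¹ * ‖gradient (ψ i) θ' - gradient (ψ i) θst‖ ^ 2
        ≤ L * ‖θ' - θst‖ ^ 2 := by
    intro θ'
    calc ∑ i ∈ P, (P.card : ℝ)⁻¹ * ‖gradient (ψ i) θ' - gradient (ψ i) θst‖ ^ 2
        ≤ ∑ _i ∈ P, (P.card : ℝ)⁻¹ * (L * ‖θ' - θst‖ ^ 2) :=
          Finset.sum_le_sum fun i hi =>
            mul_le_mul_of_nonneg_left (hsmooth i hi θ' θst) hninv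
      _ = L * ‖θ' - θst‖ ^ 2 := by
          rw [← Finset.sum_mul, hsum_inv, one_mul]
  have hvar : ∀ θ' : EuclideanSpace ℝ (Fin d),
      ∑ i ∈ P, (P.card : ℝ)⁻¹
          * ‖(gradient (ψ i) θ' - gradient (ψ i) θst) - gradient F θ'‖ ^ 2
        = (∑ i ∈ P, (P.card : ℝ)⁻¹ * ‖gradient (ψ i) θ' - gradient (ψ i) θst‖ ^ 2)
          - ‖gradient F θ'‖ ^ 2 := by
    intro θ'
    have h := avg_var_eq P hP (fun i => gradient (ψ i) θ' - gradient (ψ i) θst)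
    rw [hbar θ'] at h
    exact h
  have hvb : ∀ θ' : EuclideanSpace ℝ (Fin d),
      ∑ i ∈ P, (P.card : ℝ)⁻¹
          * ‖(gradient (ψ i) θ' - gradient (ψ i) θst) - gradient F θ'‖ ^ 2
        ≤ L * ‖θ' - θst‖ ^ 2 := by
    intro θ'
    have h1 := hvar θ'
    have h2 := hbsum θ'
    have h3 : (0:ℝ) ≤ ‖gradient F θ'‖ ^ 2 := by positivity
    linarith
  have hFb : ∀ θ' : EuclideanSpace ℝ (Fin d),
      ‖gradient F θ'‖ ^ 2 ≤ L * ‖θ' - θst‖ ^ 2 := by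
    intro θ'
    have h1 := hvar θ'
    have h2 := hbsum θ'
    have h3 : (0:ℝ) ≤ ∑ i ∈ P, (P.card : ℝ)⁻¹
        * ‖(gradient (ψ i) θ' - gradient (ψ i) θst) - gradient F θ'‖ ^ 2 :=
      Finset.sum_nonneg fun i _ => by positivity
    linarith
  have hdet : ∀ θ θ' : EuclideanSpace ℝ (Fin d),
      ∑ i ∈ P, (P.card : ℝ)⁻¹
          * ‖gradient (ψ i) θ - gradient (ψ i) θ' + gradient F θ'‖ ^ 2
        ≤ 2 * L * (‖θ - θst‖ ^ 2 + ‖θ' - θst‖ ^ 2) := by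
    intro θ θ'
    have step1 : ∑ i ∈ P, (P.card : ℝ)⁻¹
          * ‖gradient (ψ i) θ - gradient (ψ i) θ' + gradient F θ'‖ ^ 2
        ≤ ∑ i ∈ P, (2 * ((P.card : ℝ)⁻¹ * ‖gradient (ψ i) θ - gradient (ψ i) θst‖ ^ 2)
            + 2 * ((P.card : ℝ)⁻¹
              * ‖(gradient (ψ i) θ' - gradient (ψ i) θst) - gradient F θ'‖ ^ 2)) := by
      refine Finset.sum_le_sum fun i _ => ?_
      rw [hrw i θ θ']
      have h := hsq (gradient (ψ i) θ - gradient (ψ i) θst)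
        ((gradient (ψ i) θ' - gradient (ψ i) θst) - gradient F θ')
      have := mul_le_mul_of_nonneg_left h hninv
      linarith
    have step2 : ∑ i ∈ P, (2 * ((P.card : ℝ)⁻¹ * ‖gradient (ψ i) θ - gradient (ψ i) θst‖ ^ 2)
            + 2 * ((P.card : ℝ)⁻¹
              * ‖(gradient (ψ i) θ' - gradient (ψ i) θst) - gradient F θ'‖ ^ 2))
        = 2 * (∑ i ∈ P, (P.card : ℝ)⁻¹ * ‖gradient (ψ i) θ - gradient (ψ i) θst‖ ^ 2)
          + 2 * (∑ i ∈ P, (P.card : ℝ)⁻¹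
              * ‖(gradient (ψ i) θ' - gradient (ψ i) θst) - gradient F θ'‖ ^ 2) := by
      rw [Finset.sum_add_distrib, Finset.mul_sum, Finset.mul_sum]
    have h1 := hbsum θ
    have h2 := hvb θ'
    calc ∑ i ∈ P, (P.card : ℝ)⁻¹
          * ‖gradient (ψ i) θ - gradient (ψ i) θ' + gradient F θ'‖ ^ 2
        ≤ 2 * (∑ i ∈ P, (P.card : ℝ)⁻¹ * ‖gradient (ψ i) θ - gradient (ψ i) θst‖ ^ 2)
          + 2 * (∑ i ∈ P, (P.card : ℝ)⁻¹
              * ‖(gradient (ψ i) θ' - gradient (ψ i) θst) - gradient F θ'‖ ^ 2) :=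
          step2 ▸ step1
      _ ≤ 2 * L * (‖θ - θst‖ ^ 2 + ‖θ' - θst‖ ^ 2) := by linarith
  -- the probabilistic part
  have hfb : ∀ i ∈ P, ∀ θ θ' : EuclideanSpace ℝ (Fin d),
      ‖gradient (ψ i) θ - gradient (ψ i) θ' + gradient F θ'‖ ^ 2
        ≤ 2 * L * ‖θ - θst‖ ^ 2 + 8 * L * ‖θ' - θst‖ ^ 2 := by
    intro i hi θ θ'
    rw [hrw i θ θ']
    have h1 := hsq (gradient (ψ i) θ - gradient (ψ i) θst)
      ((gradient (ψ i) θ' - gradient (ψ i) θst) - gradient F θ')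
    have h2 := hsq (gradient (ψ i) θ' - gradient (ψ i) θst) (gradient F θ')
    have h3 := hsmooth i hi θ θst
    have h4 := hsmooth i hi θ' θst
    have h5 := hFb θ'
    linarith
  have hfm : ∀ i ∈ P, Measurable (fun p : EuclideanSpace ℝ (Fin d) × EuclideanSpace ℝ (Fin d) =>
      ‖gradient (ψ i) p.1 - gradient (ψ i) p.2 + gradient F p.2‖ ^ 2) := by
    intro i _
    have h1 := measurable_gradient_aux (ψ i)
    have h2 := measurable_gradient_aux F
    exact ((((h1.comp measurable_fst).sub (h1.comp measurable_snd)).add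
      (h2.comp measurable_snd)).norm).pow_const 2
  have hfi : ∀ i ∈ P, Integrable (fun ω =>
      ‖gradient (ψ i) (Θ ω) - gradient (ψ i) (Θt ω) + gradient F (Θt ω)‖ ^ 2) μ := by
    intro i hi
    refine ((hInt2.const_mul (2 * L)).add (hInt3.const_mul (8 * L))).mono'
      ((hfm i hi).comp (hΘm.prodMk hΘtm)).aestronglyMeasurable ?_
    filter_upwards with ω
    rw [Real.norm_eq_abs, abs_of_nonneg (by positivity)]
    exact hfb i hi (Θ ω) (Θt ω)
  have hYint := uniform_integral μ P I hIm hIu (fun ω => (Θ ω, Θt ω)) hindep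
    (fun i p => ‖gradient (ψ i) p.1 - gradient (ψ i) p.2 + gradient F p.2‖ ^ 2)
    hfm hfi
  subst hv
  calc ∫ ω, ‖gradient (ψ (I ω)) (Θ ω) - gradient (ψ (I ω)) (Θt ω)
          + gradient F (Θt ω)‖ ^ 2 ∂μ
      = ∑ i ∈ P, (P.card : ℝ)⁻¹ * ∫ ω,
          ‖gradient (ψ i) (Θ ω) - gradient (ψ i) (Θt ω) + gradient F (Θt ω)‖ ^ 2 ∂μ :=
        hYint
    _ = ∫ ω, ∑ i ∈ P, (P.card : ℝ)⁻¹
          * ‖gradient (ψ i) (Θ ω) - gradient (ψ i) (Θt ω) + gradient F (Θt ω)‖ ^ 2 ∂μ := by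
        rw [integral_finset_sum P (fun i hi => (hfi i hi).const_mul _)]
        exact Finset.sum_congr rfl fun i hi => (integral_const_mul _ _).symm
    _ ≤ ∫ ω, 2 * L * (‖Θ ω - θst‖ ^ 2 + ‖Θt ω - θst‖ ^ 2) ∂μ := by
        refine integral_mono (integrable_finset_sum P fun i hi => (hfi i hi).const_mul _)
          ((hInt2.add hInt3).const_mul (2 * L)) fun ω => hdet (Θ ω) (Θt ω)
    _ = 2 * L * ((∫ ω, ‖Θ ω - θst‖ ^ 2 ∂μ) + ∫ ω, ‖Θt ω - θst‖ ^ 2 ∂μ) := by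
        rw [integral_const_mul, integral_add hInt2 hInt3]
end
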